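/- The polynomial q_{0,3}³ + q_{0,3}² q_{1,2} - 2 q_{0,2} q_{0,3} q_{1,3} + q_{0,1} q_{1,3}² + q_{0,2}² q_{2,3} - q_{0,1} q_{0,3} q_{2,3} - q_{0,1} q_{1,2} q_{2,3} vanishes at the dual Plücker coordinates q_{i,j} = a_i b_j - a_j b_i of two planes if and only if the two cubics a₀s³+a₁s²t+a₂st²+a₃t³ and b₀s³+b₁s²t+b₂st²+b₃t³ have a common root (s:t) in ℙ¹, assuming the cubics are not both identically zero and (a₀,...,a₃), (b₀,...,b₃) are linearly independent. -/

import Mathlib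

/-- Dual Plücker coordinates qᵢⱼ = aᵢbⱼ - aⱼbᵢ of the line cut out by the planes
Σaᵢxᵢ = 0 and Σbᵢxᵢ = 0. -/
def dualPluecker (a b : Fin 4 → ℂ) (i j : Fin 4) : ℂ := a i * b j - a j * b i

/-!
The Chow form is the resultant of the two binary cubics. If `a₀ ≠ 0`, factor
`a(s, t) = a₀ (s - x t)(s - y t)(s - z t)` over `ℂ`; substituting Vieta's formulas for
`a₁, a₂, a₃` turns the Chow form into `a₀³ b(x, 1) b(y, 1) b(z, 1)`, which vanishes exactly when
`b` vanishes at one of the roots of `a`, none of which lies at `t = 0`. Swapping the planes only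
changes the sign of the Chow form, and if `a₀ = b₀ = 0` then `(1 : 0)` is a common root while
every monomial of the Chow form contains some `q₀ⱼ = 0`.
-/

open Polynomial in
theorem exists_cubic_vieta {K : Type*} [Field K] [IsAlgClosed K] (c₁ c₂ c₃ : K) :
    ∃ x y z : K, x + y + z = -c₁ ∧ x * y + x * z + y * z = c₂ ∧ x * y * z = -c₃ := by
  obtain ⟨x, hx⟩ := IsAlgClosed.exists_root (X ^ 3 + C c₁ * X ^ 2 + C c₂ * X + C c₃)
    (ne_of_eq_of_ne (b := 3) (by compute_degree!) (by decide))
  -- `y` is a root of the quotient of the cubic by `X - x`; the third root is then forced.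
  obtain ⟨y, hy⟩ := IsAlgClosed.exists_root (X ^ 2 + C (c₁ + x) * X + C (c₂ + c₁ * x + x ^ 2))
    (ne_of_eq_of_ne (b := 2) (by compute_degree!) (by decide))
  simp only [IsRoot, eval_add, eval_mul, eval_pow, eval_C, eval_X] at hx hy
  exact ⟨x, y, -c₁ - x - y, by ring, by linear_combination -hy, by linear_combination hx - x * hy⟩

theorem exists_cubic_vieta_of_ne_zero {K : Type*} [Field K] [IsAlgClosed K] {c₀ : K}
    (c₁ c₂ c₃ : K) (h₀ : c₀ ≠ 0) : ∃ x y z : K, c₁ = -(c₀ * (x + y + z)) ∧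
      c₂ = c₀ * (x * y + x * z + y * z) ∧ c₃ = -(c₀ * (x * y * z)) := by
  obtain ⟨x, y, z, h₁, h₂, h₃⟩ := exists_cubic_vieta (c₁ / c₀) (c₂ / c₀) (c₃ / c₀)
  refine ⟨x, y, z, ?_, ?_, ?_⟩
  · rw [h₁, mul_neg, mul_div_cancel₀ _ h₀, neg_neg]
  · rw [h₂, mul_div_cancel₀ _ h₀]
  · rw [h₃, mul_neg, mul_div_cancel₀ _ h₀, neg_neg]

section BinaryCubic

variable {R K : Type*} [CommRing R] [Field K]

def binaryCubic (c : Fin 4 → R) (s t : R) : R :=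
  c 0 * s ^ 3 + c 1 * s ^ 2 * t + c 2 * s * t ^ 2 + c 3 * t ^ 3

def HaveCommonRoot (a b : Fin 4 → R) : Prop :=
  ∃ s t : R, ¬ (s = 0 ∧ t = 0) ∧ binaryCubic a s t = 0 ∧ binaryCubic b s t = 0

theorem haveCommonRoot_comm (a b : Fin 4 → R) : HaveCommonRoot a b ↔ HaveCommonRoot b a := by
  simp only [HaveCommonRoot, and_comm (a := binaryCubic a _ _ = 0)]

theorem binaryCubic_eq_pow_mul_div {t : K} (c : Fin 4 → K) (s : K) (ht : t ≠ 0) :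
    binaryCubic c s t = t ^ 3 * binaryCubic c (s / t) 1 := by
  simp only [binaryCubic]
  field_simp

theorem haveCommonRoot_iff_of_ne_zero {a : Fin 4 → K} (b : Fin 4 → K) (ha : a 0 ≠ 0) :
    HaveCommonRoot a b ↔ ∃ x, binaryCubic a x 1 = 0 ∧ binaryCubic b x 1 = 0 := by
  constructor
  · rintro ⟨s, t, hst, has, hbs⟩
    have ht : t ≠ 0 := by
      rintro rfl
      simp_all [binaryCubic]
    refine ⟨s / t, ?_, ?_⟩
    · simpa [binaryCubic_eq_pow_mul_div a s ht, ht] using has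
    · simpa [binaryCubic_eq_pow_mul_div b s ht, ht] using hbs
  · rintro ⟨x, hax, hbx⟩
    exact ⟨x, 1, by simp, hax, hbx⟩

theorem haveCommonRoot_of_zero_zero [Nontrivial R] {a b : Fin 4 → R} (ha : a 0 = 0) (hb : b 0 = 0) :
    HaveCommonRoot a b :=
  ⟨1, 0, by simp, by simp [binaryCubic, ha], by simp [binaryCubic, hb]⟩

end BinaryCubic

def twistedCubicChowForm (a b : Fin 4 → ℂ) : ℂ :=
  dualPluecker a b 0 3 ^ 3 + dualPluecker a b 0 3 ^ 2 * dualPluecker a b 1 2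
    - 2 * dualPluecker a b 0 2 * dualPluecker a b 0 3 * dualPluecker a b 1 3
    + dualPluecker a b 0 1 * dualPluecker a b 1 3 ^ 2
    + dualPluecker a b 0 2 ^ 2 * dualPluecker a b 2 3
    - dualPluecker a b 0 1 * dualPluecker a b 0 3 * dualPluecker a b 2 3
    - dualPluecker a b 0 1 * dualPluecker a b 1 2 * dualPluecker a b 2 3

theorem twistedCubicChowForm_comm (a b : Fin 4 → ℂ) :
    twistedCubicChowForm b a = -twistedCubicChowForm a b := by
  simp only [twistedCubicChowForm, dualPluecker]
  ring

theorem twistedCubicChowForm_of_zero_zero {a b : Fin 4 → ℂ} (ha : a 0 = 0) (hb : b 0 = 0) :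
    twistedCubicChowForm a b = 0 := by
  simp only [twistedCubicChowForm, dualPluecker, ha, hb]
  ring

theorem binaryCubic_eq_mul_prod {a : Fin 4 → ℂ} {x y z : ℂ} (h₁ : a 1 = -(a 0 * (x + y + z)))
    (h₂ : a 2 = a 0 * (x * y + x * z + y * z)) (h₃ : a 3 = -(a 0 * (x * y * z))) (w : ℂ) :
    binaryCubic a w 1 = a 0 * ((w - x) * (w - y) * (w - z)) := by
  simp only [binaryCubic, h₁, h₂, h₃]
  ring

theorem twistedCubicChowForm_eq_mul_prod {a : Fin 4 → ℂ} {x y z : ℂ}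
    (h₁ : a 1 = -(a 0 * (x + y + z))) (h₂ : a 2 = a 0 * (x * y + x * z + y * z))
    (h₃ : a 3 = -(a 0 * (x * y * z))) (b : Fin 4 → ℂ) :
    twistedCubicChowForm a b =
      a 0 ^ 3 * (binaryCubic b x 1 * binaryCubic b y 1 * binaryCubic b z 1) := by
  simp only [twistedCubicChowForm, dualPluecker, binaryCubic, h₁, h₂, h₃]
  ring

theorem twistedCubicChowForm_eq_zero_iff_of_ne_zero {a : Fin 4 → ℂ} (b : Fin 4 → ℂ)
    (ha : a 0 ≠ 0) : twistedCubicChowForm a b = 0 ↔ HaveCommonRoot a b := by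
  obtain ⟨x, y, z, h₁, h₂, h₃⟩ := exists_cubic_vieta_of_ne_zero (a 1) (a 2) (a 3) ha
  rw [haveCommonRoot_iff_of_ne_zero b ha, twistedCubicChowForm_eq_mul_prod h₁ h₂ h₃]
  simp [binaryCubic_eq_mul_prod h₁ h₂ h₃, ha, sub_eq_zero, or_and_right, exists_or]

theorem twistedCubicChowForm_eq_zero_iff (a b : Fin 4 → ℂ) :
    twistedCubicChowForm a b = 0 ↔ HaveCommonRoot a b := by
  by_cases ha : a 0 = 0
  · by_cases hb : b 0 = 0
    · simp [twistedCubicChowForm_of_zero_zero ha hb, haveCommonRoot_of_zero_zero ha hb]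
    · rw [haveCommonRoot_comm, ← twistedCubicChowForm_eq_zero_iff_of_ne_zero a hb,
        twistedCubicChowForm_comm, neg_eq_zero]
  · exact twistedCubicChowForm_eq_zero_iff_of_ne_zero b ha

theorem chow_form_twisted_cubic_general (a b : Fin 4 → ℂ) :
    (dualPluecker a b 0 3 ^ 3 + dualPluecker a b 0 3 ^ 2 * dualPluecker a b 1 2
        - 2 * dualPluecker a b 0 2 * dualPluecker a b 0 3 * dualPluecker a b 1 3
        + dualPluecker a b 0 1 * dualPluecker a b 1 3 ^ 2
        + dualPluecker a b 0 2 ^ 2 * dualPluecker a b 2 3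
        - dualPluecker a b 0 1 * dualPluecker a b 0 3 * dualPluecker a b 2 3
        - dualPluecker a b 0 1 * dualPluecker a b 1 2 * dualPluecker a b 2 3 = 0)
      ↔ ∃ s t : ℂ, ¬ (s = 0 ∧ t = 0) ∧
          a 0 * s ^ 3 + a 1 * s ^ 2 * t + a 2 * s * t ^ 2 + a 3 * t ^ 3 = 0 ∧
          b 0 * s ^ 3 + b 1 * s ^ 2 * t + b 2 * s * t ^ 2 + b 3 * t ^ 3 = 0 :=
  twistedCubicChowForm_eq_zero_iff a b

/-- The Chow form of the twisted cubic: for two planes Σaᵢxᵢ = 0, Σbᵢxᵢ = 0 in ℙ³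
with linearly independent coefficient vectors (in particular not both cubics are zero),
the polynomial q₀₃³ + q₀₃²q₁₂ - 2q₀₂q₀₃q₁₃ + q₀₁q₁₃² + q₀₂²q₂₃ - q₀₁q₀₃q₂₃ - q₀₁q₁₂q₂₃
in the dual Plücker coordinates vanishes if and only if the binary cubics
a₀s³+a₁s²t+a₂st²+a₃t³ and b₀s³+b₁s²t+b₂st²+b₃t³ have a common root (s:t) ∈ ℙ¹. -/
theorem chow_form_twisted_cubic (a b : Fin 4 → ℂ)
    (hab : LinearIndependent ℂ ![a, b]) :
    (dualPluecker a b 0 3 ^ 3 + dualPluecker a b 0 3 ^ 2 * dualPluecker a b 1 2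
        - 2 * dualPluecker a b 0 2 * dualPluecker a b 0 3 * dualPluecker a b 1 3
        + dualPluecker a b 0 1 * dualPluecker a b 1 3 ^ 2
        + dualPluecker a b 0 2 ^ 2 * dualPluecker a b 2 3
        - dualPluecker a b 0 1 * dualPluecker a b 0 3 * dualPluecker a b 2 3
        - dualPluecker a b 0 1 * dualPluecker a b 1 2 * dualPluecker a b 2 3 = 0)
      ↔ ∃ s t : ℂ, ¬ (s = 0 ∧ t = 0) ∧
          a 0 * s ^ 3 + a 1 * s ^ 2 * t + a 2 * s * t ^ 2 + a 3 * t ^ 3 = 0 ∧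
          b 0 * s ^ 3 + b 1 * s ^ 2 * t + b 2 * s * t ^ 2 + b 3 * t ^ 3 = 0 :=
  chow_form_twisted_cubic_general a b
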